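/- Let P be a row-stochastic N×N real matrix with τ₁(P) < 1, and let E be a real N×N matrix such that P + E is also row-stochastic. Let w be a stationary distribution of P and w' a stationary distribution of P + E. Then ‖w − w'‖₁ ≤ ‖E‖_∞ / (1 − τ₁(P)), where ‖E‖_∞ = max_i Σ_j |E_{ij}|. -/

import Mathlib

/-! With `d = w - w'`, stationarity gives `d = d ⬝ P - w' ⬝ E`. Since `d` sums to zero, right
multiplication by `P` shrinks its `ℓ¹` norm by the factor `τ₁(P)`, while `‖w' ⬝ E‖₁ ≤ ‖E‖_∞`
because `w'` is a probability vector. Hence `‖d‖₁ ≤ τ₁(P) ‖d‖₁ + ‖E‖_∞`. -/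

/-- Coefficient of ergodicity τ₁ of a row-stochastic matrix. -/
noncomputable def tau1 {N : ℕ} (P : Fin N → Fin N → ℝ) : ℝ :=
  (1 / 2) * ⨆ i, ⨆ j, ∑ k, |P i k - P j k|

open Finset

section

variable {ι κ : Type*} [Fintype ι] [Fintype κ]

theorem sum_sum_mul_mul_sub_eq (a b x : ι → ℝ) :
    ∑ i, ∑ j, a i * b j * (x i - x j) =
      (∑ i, a i * x i) * ∑ j, b j - (∑ i, a i) * ∑ j, b j * x j := by
  simp only [sum_mul_sum, ← sum_sub_distrib]
  exact sum_congr rfl fun i _ => sum_congr rfl fun j _ => by ring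

theorem sum_abs_sum_sum_le (c : ι → ι → ℝ) (hc : ∀ i j, 0 ≤ c i j) (v : ι → ι → κ → ℝ) :
    ∑ k, |∑ i, ∑ j, c i j * v i j k| ≤ ∑ i, ∑ j, c i j * ∑ k, |v i j k| := by
  calc ∑ k, |∑ i, ∑ j, c i j * v i j k|
      ≤ ∑ k, ∑ i, ∑ j, c i j * |v i j k| := by
        gcongr with k
        refine (abs_sum_le_sum_abs _ _).trans (sum_le_sum fun i _ => ?_)
        refine (abs_sum_le_sum_abs _ _).trans (sum_le_sum fun j _ => ?_)
        rw [abs_mul, abs_of_nonneg (hc i j)]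
    _ = ∑ i, ∑ j, c i j * ∑ k, |v i j k| := by
        simp only [mul_sum]
        rw [sum_comm]
        exact sum_congr rfl fun i _ => sum_comm

theorem sum_negPart_eq_sum_posPart {d : ι → ℝ} (hd : ∑ i, d i = 0) :
    ∑ i, (d i)⁻ = ∑ i, (d i)⁺ := by
  have h : ∑ i, ((d i)⁺ - (d i)⁻) = 0 := by simpa only [posPart_sub_negPart] using hd
  rw [sum_sub_distrib, sub_eq_zero] at h
  exact h.symm

theorem sum_posPart_mul_sum_eq_sum_sum {d : ι → ℝ} (hd : ∑ i, d i = 0) (x : ι → ℝ) :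
    (∑ i, (d i)⁺) * ∑ i, d i * x i = ∑ i, ∑ j, (d i)⁺ * (d j)⁻ * (x i - x j) := by
  have hsplit : ∑ i, d i * x i = ∑ i, (d i)⁺ * x i - ∑ i, (d i)⁻ * x i := by
    simp only [← sum_sub_distrib, ← sub_mul, posPart_sub_negPart]
  rw [sum_sum_mul_mul_sub_eq, sum_negPart_eq_sum_posPart hd, hsplit]
  ring

/-- The positive and negative parts of `d` carry the same mass `m`, and `m • (d ⬝ P)` is a
nonnegative combination of differences of rows of `P` with total weight `m²`. -/
theorem sum_abs_sum_mul_le_of_sum_eq_zero (P : ι → κ → ℝ) {t : ℝ}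
    (hP : ∀ i j, ∑ k, |P i k - P j k| ≤ 2 * t) {d : ι → ℝ} (hd : ∑ i, d i = 0) :
    ∑ k, |∑ i, d i * P i k| ≤ t * ∑ i, |d i| := by
  set m := ∑ i, (d i)⁺
  have hm_nonneg : 0 ≤ m := sum_nonneg fun i _ => posPart_nonneg _
  have habs : ∑ i, |d i| = 2 * m := by
    simp only [← posPart_add_negPart, sum_add_distrib, sum_negPart_eq_sum_posPart hd]
    ring
  have hweight : ∀ i j, 0 ≤ (d i)⁺ * (d j)⁻ := fun i j =>
    mul_nonneg (posPart_nonneg (d i)) (negPart_nonneg (d j))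
  have hbound : m * ∑ k, |∑ i, d i * P i k| ≤ m * (2 * t * m) := by
    calc m * ∑ k, |∑ i, d i * P i k|
        = ∑ k, |∑ i, ∑ j, (d i)⁺ * (d j)⁻ * (P i k - P j k)| := by
          rw [mul_sum]
          refine sum_congr rfl fun k _ => ?_
          rw [← sum_posPart_mul_sum_eq_sum_sum hd, abs_mul, abs_of_nonneg hm_nonneg]
      _ ≤ ∑ i, ∑ j, (d i)⁺ * (d j)⁻ * ∑ k, |P i k - P j k| :=
          sum_abs_sum_sum_le _ hweight _
      _ ≤ ∑ i, ∑ j, (d i)⁺ * (d j)⁻ * (2 * t) := by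
          gcongr with i _ j _
          exact hP i j
      _ = m * (2 * t * m) := by
          simp only [← sum_mul, ← mul_sum, sum_negPart_eq_sum_posPart hd]
          ring
  rcases hm_nonneg.eq_or_lt with hm_zero | hm_pos
  · have hd_zero : ∀ i, d i = 0 := fun i => abs_eq_zero.mp <|
      (sum_eq_zero_iff_of_nonneg fun i _ => abs_nonneg (d i)).mp
        (by rw [habs, ← hm_zero, mul_zero]) i (mem_univ i)
    simp [hd_zero]
  · rw [habs]
    linarith [le_of_mul_le_mul_left hbound hm_pos]

theorem sum_abs_sum_mul_le_iSup_sum_abs (E : ι → κ → ℝ) {w : ι → ℝ} (hw : ∀ i, 0 ≤ w i)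
    (hsum : ∑ i, w i = 1) :
    ∑ k, |∑ i, w i * E i k| ≤ ⨆ i, ∑ k, |E i k| := by
  calc ∑ k, |∑ i, w i * E i k|
      ≤ ∑ k, ∑ i, w i * |E i k| := by
        gcongr with k
        refine (abs_sum_le_sum_abs _ _).trans (sum_le_sum fun i _ => ?_)
        rw [abs_mul, abs_of_nonneg (hw i)]
    _ = ∑ i, w i * ∑ k, |E i k| := by
        simp only [mul_sum]
        exact sum_comm
    _ ≤ ∑ i, w i * ⨆ i, ∑ k, |E i k| :=
        sum_le_sum fun i _ => mul_le_mul_of_nonneg_left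
          (le_ciSup (Finite.bddAbove_range fun i => ∑ k, |E i k|) i) (hw i)
    _ = ⨆ i, ∑ k, |E i k| := by rw [← sum_mul, hsum, one_mul]

end

theorem sum_abs_sub_le_two_mul_tau1 {N : ℕ} (P : Fin N → Fin N → ℝ) (i j : Fin N) :
    ∑ k, |P i k - P j k| ≤ 2 * tau1 P := by
  have hrow : ∑ k, |P i k - P j k| ≤ ⨆ j, ∑ k, |P i k - P j k| :=
    le_ciSup (Finite.bddAbove_range fun j => ∑ k, |P i k - P j k|) j
  have hall : (⨆ j, ∑ k, |P i k - P j k|) ≤ ⨆ i, ⨆ j, ∑ k, |P i k - P j k| :=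
    le_ciSup (Finite.bddAbove_range fun i => ⨆ j, ∑ k, |P i k - P j k|) i
  rw [tau1]
  linarith

theorem stationary_perturbation_bound_general {N : ℕ}
    (P E : Fin N → Fin N → ℝ)
    (htau : tau1 P < 1)
    (w : Fin N → ℝ) (hwsum : ∑ i, w i = 1)
    (hwstat : ∀ j, ∑ i, w i * P i j = w j)
    (w' : Fin N → ℝ) (hw'nn : ∀ i, 0 ≤ w' i) (hw'sum : ∑ i, w' i = 1)
    (hw'stat : ∀ j, ∑ i, w' i * (P i j + E i j) = w' j) :
    ∑ i, |w i - w' i| ≤ (⨆ i, ∑ j, |E i j|) / (1 - tau1 P) := by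
  have hd : ∑ i, (w i - w' i) = 0 := by rw [sum_sub_distrib, hwsum, hw'sum, sub_self]
  have hdiff : ∀ k, w k - w' k = ∑ i, (w i - w' i) * P i k - ∑ i, w' i * E i k := by
    intro k
    rw [← hwstat k, ← hw'stat k]
    simp only [sub_mul, mul_add, sum_sub_distrib, sum_add_distrib]
    ring
  have hcontract := sum_abs_sum_mul_le_of_sum_eq_zero P (sum_abs_sub_le_two_mul_tau1 P) hd
  have hpert := sum_abs_sum_mul_le_iSup_sum_abs E hw'nn hw'sum
  have hrec : ∑ k, |w k - w' k| ≤ tau1 P * ∑ i, |w i - w' i| + ⨆ i, ∑ k, |E i k| :=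
    calc ∑ k, |w k - w' k|
        = ∑ k, |∑ i, (w i - w' i) * P i k - ∑ i, w' i * E i k| := by simp only [← hdiff]
      _ ≤ ∑ k, (|∑ i, (w i - w' i) * P i k| + |∑ i, w' i * E i k|) :=
          sum_le_sum fun k _ => abs_sub _ _
      _ ≤ tau1 P * ∑ i, |w i - w' i| + ⨆ i, ∑ k, |E i k| := by
          rw [sum_add_distrib]
          exact add_le_add hcontract hpert
  rw [le_div_iff₀ (sub_pos.mpr htau)]
  linarith

/-- Perturbation bound for stationary distributions (Seneta):
`‖w − w'‖₁ ≤ ‖E‖_∞ / (1 − τ₁(P))`. -/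
theorem stationary_perturbation_bound {N : ℕ} [NeZero N]
    (P E : Fin N → Fin N → ℝ)
    (hPnn : ∀ i j, 0 ≤ P i j) (hProw : ∀ i, ∑ j, P i j = 1)
    (hPEnn : ∀ i j, 0 ≤ P i j + E i j) (hPErow : ∀ i, ∑ j, (P i j + E i j) = 1)
    (htau : tau1 P < 1)
    (w : Fin N → ℝ) (hwnn : ∀ i, 0 ≤ w i) (hwsum : ∑ i, w i = 1)
    (hwstat : ∀ j, ∑ i, w i * P i j = w j)
    (w' : Fin N → ℝ) (hw'nn : ∀ i, 0 ≤ w' i) (hw'sum : ∑ i, w' i = 1)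
    (hw'stat : ∀ j, ∑ i, w' i * (P i j + E i j) = w' j) :
    ∑ i, |w i - w' i| ≤ (⨆ i, ∑ j, |E i j|) / (1 - tau1 P) :=
  stationary_perturbation_bound_general P E htau w hwsum hwstat w' hw'nn hw'sum hw'stat
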